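/- arXiv:2406.09808 — 2 statements merged into one kernel-verified Lean document; each statement's English description precedes it below -/
import Mathlib

section
/- Let X be a compact metric space and K a weak*-compact set of Borel probability measures on X. If the collection of open sets U with μ(∂U)=0 for all μ∈K forms a basis for the topology of X, then for every δ>0 there exists a finite collection 𝓘 of pairwise disjoint open subsets of X, each of diameter at most δ, such that μ(⋃_{U∈𝓘} U)=1 for every μ∈K. -/
open MeasureTheory Topology

theorem stmt0 (X : Type*) [MetricSpace X] [CompactSpace X]
    [MeasurableSpace X] [BorelSpace X]
    (K : Set (ProbabilityMeasure X)) (hK : IsCompact K)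
    (hbasis : TopologicalSpace.IsTopologicalBasis
      {U : Set X | IsOpen U ∧ ∀ μ ∈ K, (μ : ProbabilityMeasure X) (frontier U) = 0}) :
    ∀ δ > (0 : ℝ), ∃ 𝓘 : Finset (Set X),
      (∀ U ∈ 𝓘, IsOpen U ∧ Metric.diam U ≤ δ) ∧
      (∀ U ∈ 𝓘, ∀ V ∈ 𝓘, U ≠ V → Disjoint U V) ∧
      (∀ μ ∈ K, (μ : ProbabilityMeasure X) (⋃ U ∈ 𝓘, U) = 1) := by
  intro δ hδ
  classical
  -- choose for each x a basis set
  have hchoice : ∀ x : X, ∃ U : Set X, x ∈ U ∧ IsOpen U ∧ Metric.diam U ≤ δ ∧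
      ∀ μ ∈ K, (μ : ProbabilityMeasure X) (frontier U) = 0 := by
    intro x
    obtain ⟨U, hU, hxU, hUsub⟩ := hbasis.exists_subset_of_mem_open
      (Metric.mem_ball_self (by positivity : (0:ℝ) < δ/2)) Metric.isOpen_ball
    refine ⟨U, hxU, hU.1, ?_, hU.2⟩
    calc Metric.diam U ≤ Metric.diam (Metric.ball x (δ/2)) :=
          Metric.diam_mono hUsub Metric.isBounded_ball
      _ ≤ 2 * (δ/2) := Metric.diam_ball (by linarith)
      _ = δ := by ring
  choose Uc hxU hUopen hUdiam hUfr using hchoice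
  obtain ⟨t, ht⟩ := isCompact_univ.elim_finite_subcover Uc hUopen
    (fun x _ => Set.mem_iUnion.2 ⟨x, hxU x⟩)
  set l := t.toList with hl
  set n := l.length with hn
  set W : ℕ → Set X := fun i => if h : i < n then Uc (l.get ⟨i, h⟩) else ∅ with hW
  have hWopen : ∀ i, IsOpen (W i) := by
    intro i; rw [hW]; dsimp only; split
    · exact hUopen _
    · exact isOpen_empty
  have hWdiam : ∀ i, Metric.diam (W i) ≤ δ := by
    intro i; rw [hW]; dsimp only; split
    · exact hUdiam _
    · simpa using hδ.le
  have hWfr : ∀ i, ∀ μ ∈ K, (μ : ProbabilityMeasure X) (frontier (W i)) = 0 := by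
    intro i μ hμ; rw [hW]; dsimp only; split
    · exact hUfr _ μ hμ
    · simp
  have hWcov : ∀ x : X, ∃ i, i < n ∧ x ∈ W i := by
    intro x
    have := ht (Set.mem_univ x)
    simp only [Set.mem_iUnion] at this
    obtain ⟨y, hy, hxy⟩ := this
    have : y ∈ l := by rw [hl]; exact Finset.mem_toList.2 hy
    obtain ⟨j, hj⟩ := List.get_of_mem this
    refine ⟨j, j.2, ?_⟩
    rw [hW]; dsimp only
    rw [dif_pos j.2]
    have hje : l.get ⟨(j : ℕ), j.2⟩ = y := hj
    rw [hje]; exact hxy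
  set V : ℕ → Set X := fun i => W i \ closure (⋃ j < i, W j) with hV
  have hVopen : ∀ i, IsOpen (V i) :=
    fun i => (hWopen i).sdiff isClosed_closure
  have hVsub : ∀ i, V i ⊆ W i := fun i => Set.diff_subset
  -- disjointness
  have hVdisj : ∀ i j, i < j → Disjoint (V i) (V j) := by
    intro i j hij
    refine Set.disjoint_left.2 fun x hxi hxj => ?_
    have h1 : x ∈ W i := hVsub i hxi
    have h2 : x ∈ closure (⋃ k < j, W k) :=
      subset_closure (Set.mem_biUnion hij h1)
    exact hxj.2 h2
  -- covering up to frontiers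
  have hkey : ∀ x : X, x ∈ (⋃ i ∈ Finset.range n, V i) ∪
      ⋃ i ∈ Finset.range n, frontier (W i) := by
    intro x
    have hex : ∃ i, x ∈ W i := (hWcov x).imp (fun i h => h.2)
    set i0 := Nat.find hex with hi0
    have hxW : x ∈ W i0 := Nat.find_spec hex
    have hi0n : i0 < n := by
      by_contra h
      push_neg at h
      have : W i0 = ∅ := by rw [hW]; dsimp only; rw [dif_neg (by omega)]
      rw [this] at hxW; exact hxW
    by_cases hxV : x ∈ V i0
    · exact Or.inl (Set.mem_biUnion (Finset.mem_range.2 hi0n) hxV)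
    · right
      have hxcl : x ∈ closure (⋃ j < i0, W j) := by
        rw [hV] at hxV; dsimp only at hxV
        by_contra h
        exact hxV ⟨hxW, h⟩
      have hcl : closure (⋃ j < i0, W j) ⊆ ⋃ j < i0, closure (W j) := by
        have : (⋃ j < i0, W j) = ⋃ j : Finset.range i0, W j := by
          ext y; simp
        rw [this, closure_iUnion_of_finite]
        refine Set.iUnion_subset fun j => ?_
        intro y hy
        exact Set.mem_biUnion (Finset.mem_range.1 j.2) hy
      obtain ⟨j, hj, hxj⟩ := by simpa using hcl hxcl
      have hxnW : x ∉ W j := Nat.find_min hex hj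
      refine Set.mem_biUnion (Finset.mem_range.2 (lt_trans hj hi0n)) ?_
      rw [(hWopen j).frontier_eq]
      exact ⟨hxj, hxnW⟩
  -- the finset
  refine ⟨(Finset.range n).image V, ?_, ?_, ?_⟩
  · intro U hU
    obtain ⟨i, _, rfl⟩ := Finset.mem_image.1 hU
    refine ⟨hVopen i, le_trans (Metric.diam_mono (hVsub i) ?_) (hWdiam i)⟩
    exact isCompact_univ.isBounded.subset (Set.subset_univ _)
  · intro A hA B hB hAB
    obtain ⟨i, _, rfl⟩ := Finset.mem_image.1 hA
    obtain ⟨j, _, rfl⟩ := Finset.mem_image.1 hB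
    rcases lt_trichotomy i j with h | h | h
    · exact hVdisj i j h
    · exact absurd (by rw [h]) hAB
    · exact (hVdisj j i h).symm
  · intro μ hμ
    have hU : (⋃ U ∈ (Finset.range n).image V, U) = ⋃ i ∈ Finset.range n, V i := by
      ext x
      simp only [Set.mem_iUnion, Finset.mem_image]
      constructor
      · rintro ⟨U, ⟨i, hi, rfl⟩, hx⟩; exact ⟨i, hi, hx⟩
      · rintro ⟨i, hi, hx⟩; exact ⟨V i, ⟨i, hi, rfl⟩, hx⟩
    rw [hU]
    set A := ⋃ i ∈ Finset.range n, V i with hA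
    set B := ⋃ i ∈ Finset.range n, frontier (W i) with hB
    have hmB : μ.toMeasure B = 0 := by
      refine measure_biUnion_null_iff (Finset.range n).countable_toSet |>.2 ?_
      intro i _
      have := hWfr i μ hμ
      have h2 : ((μ (frontier (W i)) : NNReal) : ENNReal) = μ.toMeasure (frontier (W i)) :=
        ProbabilityMeasure.ennreal_coeFn_eq_coeFn_toMeasure μ _
      rw [this] at h2
      simpa using h2.symm
    have h1 : (1 : ENNReal) ≤ μ.toMeasure A := by
      have huniv : (Set.univ : Set X) ⊆ A ∪ B := fun x _ => hkey x
      calc (1 : ENNReal) = μ.toMeasure Set.univ := by simp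
        _ ≤ μ.toMeasure (A ∪ B) := measure_mono huniv
        _ ≤ μ.toMeasure A + μ.toMeasure B := measure_union_le _ _
        _ = μ.toMeasure A := by rw [hmB, add_zero]
    have h2 : μ.toMeasure A = 1 := le_antisymm prob_le_one h1
    have h3 : ((μ A : NNReal) : ENNReal) = μ.toMeasure A :=
      ProbabilityMeasure.ennreal_coeFn_eq_coeFn_toMeasure μ _
    rw [h2] at h3
    exact_mod_cast h3
end

section
/- Let X be a compact metric space, μ a Borel probability measure on X, and δ, ε > 0. Then there exist finitely many continuous functions f_1,…,f_m : X → [0,1] with pairwise disjoint open supports, each open support having diameter less than δ, such that μ applied to 1 − (f_1 + ⋯ + f_m) is less than ε, i.e. ∫ (1 − ∑_i f_i) dμ < ε. -/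
/-!
Cut the compact space into finitely many measurable pieces of small diameter, and use inner
regularity of `μ` to pick inside each piece a compact set so that together they miss only
measure `< ε`. These compact sets are pairwise disjoint, hence have pairwise disjoint
`r`-thickenings for some small `r > 0`; Urysohn functions equal to `1` on each compact set and
vanishing off its thickening then do the job, since `1 - ∑ i, f i` is at most the indicator of
the part of the space the compact sets miss.
-/

open MeasureTheory Metric Set Filter Topology Function
open scoped ENNReal

lemma exists_measurable_partition_diam_le {X : Type*} [PseudoMetricSpace X] [CompactSpace X]
    [MeasurableSpace X] [OpensMeasurableSpace X] {δ : ℝ} (hδ : 0 < δ) :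
    ∃ (n : ℕ) (A : Fin n → Set X), (∀ i, MeasurableSet (A i)) ∧ Pairwise (Disjoint on A) ∧
      ⋃ i, A i = univ ∧ ∀ i, diam (A i) ≤ δ := by
  obtain ⟨t, -, ht, hcover⟩ :=
    finite_cover_balls_of_compact (isCompact_univ (X := X)) (half_pos hδ)
  obtain ⟨n, c, rfl⟩ := ht.fin_embedding
  set B : Fin n → Set X := fun i => ball (c i) (δ / 2)
  refine ⟨n, disjointed B, fun i => ?_, disjoint_disjointed B, ?_, fun i => ?_⟩
  · rw [disjointed_eq_inter_compl]
    exact measurableSet_ball.inter <| .iInter fun j => .iInter fun _ => measurableSet_ball.compl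
  · rw [iUnion_disjointed]
    simpa [B, biUnion_range, univ_subset_iff] using hcover
  · calc diam (disjointed B i) ≤ diam (B i) := diam_mono (disjointed_subset B i) isBounded_ball
      _ ≤ 2 * (δ / 2) := diam_ball (half_pos hδ).le
      _ = δ := by ring

lemma exists_isCompact_subset_measure_compl_iUnion_lt {X : Type*} [TopologicalSpace X]
    [T2Space X] [MeasurableSpace X] [OpensMeasurableSpace X] (μ : Measure X) [IsFiniteMeasure μ]
    [μ.InnerRegularCompactLTTop] {ι : Type*} [Countable ι] {A : ι → Set X}
    (hA : ∀ i, MeasurableSet (A i)) (hcover : ⋃ i, A i = univ) {ε : ℝ≥0∞} (hε : ε ≠ 0) :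
    ∃ K : ι → Set X, (∀ i, K i ⊆ A i) ∧ (∀ i, IsCompact (K i)) ∧ μ (⋃ i, K i)ᶜ < ε := by
  obtain ⟨ε', hε'pos, hε'sum⟩ := ENNReal.exists_pos_sum_of_countable' hε ι
  choose K hKA hKc hKμ using fun i =>
    (hA i).exists_isCompact_sdiff_lt (measure_ne_top μ _) (hε'pos i).ne'
  refine ⟨K, hKA, hKc, ?_⟩
  have hmissed : (⋃ i, K i)ᶜ ⊆ ⋃ i, A i \ K i := fun x hx => by
    obtain ⟨i, hi⟩ := mem_iUnion.1 (hcover ▸ mem_univ x)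
    exact mem_iUnion.2 ⟨i, hi, fun hK => hx (mem_iUnion.2 ⟨i, hK⟩)⟩
  calc μ (⋃ i, K i)ᶜ ≤ ∑' i, μ (A i \ K i) := (measure_mono hmissed).trans (measure_iUnion_le _)
    _ ≤ ∑' i, ε' i := ENNReal.tsum_le_tsum fun i => (hKμ i).le
    _ < ε := hε'sum

section DisjointCompacts

variable {X : Type*} [MetricSpace X] {ι : Type*} [Finite ι] {K : ι → Set X}

lemma exists_pairwise_disjoint_thickenings (hK : ∀ i, IsCompact (K i))
    (hdisj : Pairwise (Disjoint on K)) {η : ℝ} (hη : 0 < η) :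
    ∃ r, 0 < r ∧ r ≤ η ∧ Pairwise (Disjoint on fun i => thickening r (K i)) := by
  have hpair : ∀ p : ι × ι, ∀ᶠ r in 𝓝[>] (0 : ℝ),
      p.1 ≠ p.2 → Disjoint (thickening r (K p.1)) (thickening r (K p.2)) := by
    rintro ⟨i, j⟩
    by_cases hij : i = j
    · exact Eventually.of_forall fun _ h => absurd hij h
    obtain ⟨ρ, hρ, hρdisj⟩ := (hdisj hij).exists_thickenings (hK i) (hK j).isClosed
    filter_upwards [Ioc_mem_nhdsGT hρ] with r hr _
    exact hρdisj.mono (thickening_mono hr.2 _) (thickening_mono hr.2 _)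
  obtain ⟨r, hsep, hr⟩ := ((eventually_all.2 hpair).and (Ioc_mem_nhdsGT hη)).exists
  exact ⟨r, hr.1, hr.2, fun i j hij => hsep (i, j) hij⟩

lemma exists_urysohn_family_of_pairwise_disjoint (hK : ∀ i, IsCompact (K i))
    (hdisj : Pairwise (Disjoint on K)) {η : ℝ} (hη : 0 < η) :
    ∃ f : ι → C(X, ℝ), (∀ i x, f i x ∈ Icc (0 : ℝ) 1) ∧ (∀ i, EqOn (f i) 1 (K i)) ∧
      (∀ i, {x | f i x ≠ 0} ⊆ thickening η (K i)) ∧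
      Pairwise fun i j => ∀ x, f i x * f j x = 0 := by
  obtain ⟨r, hr, hrη, hUdisj⟩ := exists_pairwise_disjoint_thickenings hK hdisj hη
  choose f hf0 hf1 hf01 using fun i =>
    exists_continuous_zero_one_of_isClosed isOpen_thickening.isClosed_compl (hK i).isClosed
      (disjoint_compl_left.mono_right (self_subset_thickening hr (K i)))
  have hsupp : ∀ i, {x | f i x ≠ 0} ⊆ thickening r (K i) := fun i x hx => by
    by_contra hxU
    exact hx (hf0 i hxU)
  refine ⟨f, hf01, hf1, fun i => (hsupp i).trans (thickening_mono hrη _), fun i j hij x => ?_⟩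
  by_contra hne
  exact disjoint_left.1 (hUdisj hij) (hsupp i (left_ne_zero_of_mul hne))
    (hsupp j (right_ne_zero_of_mul hne))

end DisjointCompacts

lemma one_sub_sum_le_indicator_compl_iUnion {X ι : Type*} [Fintype ι] {K : ι → Set X}
    {f : ι → X → ℝ} (hf0 : ∀ i x, 0 ≤ f i x) (hf1 : ∀ i, EqOn (f i) 1 (K i)) (x : X) :
    1 - ∑ i, f i x ≤ (⋃ i, K i)ᶜ.indicator 1 x := by
  by_cases hx : x ∈ ⋃ i, K i
  · obtain ⟨j, hj⟩ := mem_iUnion.1 hx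
    rw [indicator_of_notMem (notMem_compl_iff.2 hx), sub_nonpos]
    exact (hf1 j hj).symm.trans_le (Finset.single_le_sum (fun i _ => hf0 i x) (Finset.mem_univ j))
  · rw [indicator_of_mem hx, Pi.one_apply, sub_le_self_iff]
    exact Finset.sum_nonneg fun i _ => hf0 i x

lemma integral_one_sub_sum_le_measureReal_compl_iUnion {X : Type*} [TopologicalSpace X]
    [CompactSpace X] [MeasurableSpace X] [OpensMeasurableSpace X] (μ : Measure X)
    [IsFiniteMeasure μ] {ι : Type*} [Fintype ι] {K : ι → Set X} (hK : ∀ i, IsClosed (K i))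
    {f : ι → C(X, ℝ)} (hf0 : ∀ i x, 0 ≤ f i x) (hf1 : ∀ i, EqOn (f i) 1 (K i)) :
    ∫ x, (1 - ∑ i, f i x) ∂μ ≤ μ.real (⋃ i, K i)ᶜ := by
  have hmeas : MeasurableSet (⋃ i, K i)ᶜ :=
    (MeasurableSet.iUnion fun i => (hK i).measurableSet).compl
  have hint : Integrable (fun x => 1 - ∑ i, f i x) μ :=
    (continuous_const.sub (continuous_finsetSum _ fun i _ => (f i).continuous))
      |>.integrable_of_hasCompactSupport (.of_compactSpace _)
  calc ∫ x, (1 - ∑ i, f i x) ∂μ ≤ ∫ x, (⋃ i, K i)ᶜ.indicator 1 x ∂μ :=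
        integral_mono hint ((integrable_const 1).indicator hmeas)
          (one_sub_sum_le_indicator_compl_iUnion hf0 hf1)
    _ = μ.real (⋃ i, K i)ᶜ := integral_indicator_one hmeas

theorem stmt3 (X : Type*) [MetricSpace X] [CompactSpace X]
    [MeasurableSpace X] [BorelSpace X]
    (μ : ProbabilityMeasure X) (δ ε : ℝ) (hδ : 0 < δ) (hε : 0 < ε) :
    ∃ (m : ℕ) (f : Fin m → C(X, ℝ)),
      (∀ i, ∀ x, f i x ∈ Set.Icc (0 : ℝ) 1) ∧
      (∀ i j, i ≠ j → ∀ x, f i x * f j x = 0) ∧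
      (∀ i, Metric.diam {x | f i x ≠ 0} < δ) ∧
      (∫ x, (1 - ∑ i, f i x) ∂(μ : Measure X)) < ε := by
  obtain ⟨n, A, hAmeas, hAdisj, hAcover, hAdiam⟩ :=
    exists_measurable_partition_diam_le (X := X) (δ := δ / 4) (by positivity)
  obtain ⟨K, hKA, hKc, hKμ⟩ := exists_isCompact_subset_measure_compl_iUnion_lt (μ : Measure X)
    hAmeas hAcover (ENNReal.ofReal_pos.2 hε).ne'
  obtain ⟨f, hf01, hf1, hfsupp, hfdisj⟩ := exists_urysohn_family_of_pairwise_disjoint hKc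
    (hAdisj.mono fun i j h => h.mono (hKA i) (hKA j)) (η := δ / 4) (by positivity)
  refine ⟨n, f, hf01, fun i j hij => hfdisj hij, fun i => ?_, ?_⟩
  · calc diam {x | f i x ≠ 0} ≤ diam (thickening (δ / 4) (K i)) :=
          diam_mono (hfsupp i) isBounded_of_compactSpace
      _ ≤ diam (K i) + 2 * (δ / 4) := diam_thickening_le _ (by positivity)
      _ ≤ δ / 4 + 2 * (δ / 4) := by
          gcongr
          exact (diam_mono (hKA i) isBounded_of_compactSpace).trans (hAdiam i)
      _ < δ := by linarith
  · calc ∫ x, (1 - ∑ i, f i x) ∂(μ : Measure X) ≤ (μ : Measure X).real (⋃ i, K i)ᶜ :=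
          integral_one_sub_sum_le_measureReal_compl_iUnion _ (fun i => (hKc i).isClosed)
            (fun i x => (hf01 i x).1) hf1
      _ < ε := ENNReal.toReal_lt_of_lt_ofReal hKμ
end
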